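/- Suppose log Ψ(t) = β₁ min(log t - log τ, 0) + β₂(log τ + max(log t - log τ, 0)) holds for all t in an open subinterval of (0,1) containing points on both sides of τ, and also equals β₁' min(log t - log τ', 0) + β₂'(log τ' + max(log t - log τ', 0)) for all such t with change point τ' in the same interval. If β₁ ≠ β₂ and β₁' ≠ β₂', then (β₁,β₂,τ) = (β₁',β₂',τ'): the parameters of the segmented model are identifiable when a genuine change point exists. -/

import Mathlib

/-!
In the coordinate `x = log t` the model is the broken line `x ↦ β₁ (x - L) + β₂ L` for `x ≤ L`
and `x ↦ β₂ x` for `x ≥ L`, where `L = log τ`. Two such lines that agree on an interval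
containing both change points agree at two points below both of them and at two points above
both, which forces equal slopes `β₁ = β₁'` and `β₂ = β₂'`. The left pieces then differ by the
constant `(β₂ - β₁) (L - L')`, so `β₁ ≠ β₂` gives `L = L'`, and `τ = τ'` since `log` is
injective on `(0, ∞)`.
-/

open Set Real

/-- `log Ψ` as a function of `x = log t`, with change point `L = log τ`. -/
def segmentedLinear (β₁ β₂ L x : ℝ) : ℝ :=
  β₁ * min (x - L) 0 + β₂ * (L + max (x - L) 0)

section segmentedLinear

variable {β₁ β₂ β₁' β₂' L L' x : ℝ}

lemma segmentedLinear_of_le (h : x ≤ L) :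
    segmentedLinear β₁ β₂ L x = β₁ * (x - L) + β₂ * L := by
  simp [segmentedLinear, min_eq_left (sub_nonpos.2 h), max_eq_right (sub_nonpos.2 h)]

lemma segmentedLinear_of_ge (h : L ≤ x) : segmentedLinear β₁ β₂ L x = β₂ * x := by
  simp [segmentedLinear, min_eq_right (sub_nonneg.2 h), max_eq_left (sub_nonneg.2 h)]

lemma slope_eq_of_affine_eq_of_ne {p q p' q' x₀ x₁ : ℝ} (hx : x₀ ≠ x₁)
    (h₀ : p * x₀ + q = p' * x₀ + q') (h₁ : p * x₁ + q = p' * x₁ + q') : p = p' :=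
  mul_right_cancel₀ (sub_ne_zero.2 hx) (by linear_combination h₀ - h₁)

theorem segmentedLinear_params_eq_of_eqOn_Ioo {a b : ℝ}
    (hL : L ∈ Ioo a b) (hL' : L' ∈ Ioo a b) (hβ : β₁ ≠ β₂)
    (heq : ∀ x ∈ Ioo a b, segmentedLinear β₁ β₂ L x = segmentedLinear β₁' β₂' L' x) :
    β₁ = β₁' ∧ β₂ = β₂' ∧ L = L' := by
  obtain ⟨x₁, hax₁, hx₁L⟩ := exists_between (lt_min hL.1 hL'.1)
  obtain ⟨x₀, hax₀, hx₀₁⟩ := exists_between hax₁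
  obtain ⟨x₂, hLx₂, hx₂b⟩ := exists_between (max_lt hL.2 hL'.2)
  obtain ⟨x₃, hx₂₃, hx₃b⟩ := exists_between hx₂b
  have below {x : ℝ} (hax : a < x) (hxL : x < min L L') :
      β₁ * x + (β₂ - β₁) * L = β₁' * x + (β₂' - β₁') * L' := by
    have h := heq x ⟨hax, hxL.trans ((min_le_left _ _).trans_lt hL.2)⟩
    rw [segmentedLinear_of_le (hxL.le.trans (min_le_left _ _)),
      segmentedLinear_of_le (hxL.le.trans (min_le_right _ _))] at h
    linear_combination h
  have above {x : ℝ} (hLx : max L L' < x) (hxb : x < b) : β₂ * x + 0 = β₂' * x + 0 := by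
    have h := heq x ⟨hL.1.trans (lt_of_le_of_lt (le_max_left _ _) hLx), hxb⟩
    rw [segmentedLinear_of_ge ((le_max_left _ _).trans hLx.le),
      segmentedLinear_of_ge ((le_max_right _ _).trans hLx.le)] at h
    linear_combination h
  have hβ₁ : β₁ = β₁' := slope_eq_of_affine_eq_of_ne hx₀₁.ne
    (below hax₀ (hx₀₁.trans hx₁L)) (below hax₁ hx₁L)
  have hβ₂ : β₂ = β₂' := slope_eq_of_affine_eq_of_ne hx₂₃.ne
    (above hLx₂ hx₂b) (above (hLx₂.trans hx₂₃) hx₃b)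
  subst hβ₁ hβ₂
  have hL : (β₂ - β₁) * L = (β₂ - β₁) * L' := by
    linear_combination below hax₁ hx₁L
  exact ⟨rfl, rfl, mul_left_cancel₀ (sub_ne_zero.2 hβ.symm) hL⟩

end segmentedLinear

theorem stmt13_general (β₁ β₂ β₁' β₂' τ τ' c d : ℝ)
    (hsub : Set.Ioo c d ⊆ Set.Ioo (0:ℝ) 1)
    (hτ : τ ∈ Set.Ioo c d) (hτ' : τ' ∈ Set.Ioo c d)
    (hβ : β₁ ≠ β₂)
    (hagree : ∀ t ∈ Set.Ioo c d,
      β₁ * min (Real.log t - Real.log τ) 0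
          + β₂ * (Real.log τ + max (Real.log t - Real.log τ) 0)
        = β₁' * min (Real.log t - Real.log τ') 0
          + β₂' * (Real.log τ' + max (Real.log t - Real.log τ') 0)) :
    β₁ = β₁' ∧ β₂ = β₂' ∧ τ = τ' := by
  have hτ₀ : 0 < τ := (hsub hτ).1
  have hτ'₀ : 0 < τ' := (hsub hτ').1
  -- `c` may be `≤ 0`, where `log` takes junk values: shrink to a positive left end below `τ, τ'`.
  set a := max c (min τ τ' / 2)
  have ha : 0 < a := lt_max_of_lt_right (by positivity)
  have haτ : a < min τ τ' := max_lt (lt_min hτ.1 hτ'.1) (by linarith [lt_min hτ₀ hτ'₀])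
  have hlog_mem {σ : ℝ} (hσ : σ ∈ Ioo c d) (hσa : a < σ) : log σ ∈ Ioo (log a) (log d) :=
    ⟨log_lt_log ha hσa, log_lt_log (ha.trans hσa) hσ.2⟩
  have heq (x : ℝ) (hx : x ∈ Ioo (log a) (log d)) :
      segmentedLinear β₁ β₂ (log τ) x = segmentedLinear β₁' β₂' (log τ') x := by
    have hex : exp x ∈ Ioo c d :=
      ⟨(le_max_left _ _).trans_lt ((log_lt_iff_lt_exp ha).1 hx.1),
        (lt_log_iff_exp_lt (hτ₀.trans hτ.2)).1 hx.2⟩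
    simpa only [segmentedLinear, log_exp] using hagree (exp x) hex
  obtain ⟨hβ₁, hβ₂, hL⟩ := segmentedLinear_params_eq_of_eqOn_Ioo
    (hlog_mem hτ (haτ.trans_le (min_le_left _ _)))
    (hlog_mem hτ' (haτ.trans_le (min_le_right _ _))) hβ heq
  exact ⟨hβ₁, hβ₂, log_injOn_pos hτ₀ hτ'₀ hL⟩

/-- Identifiability of the segmented correspondence curve regression: two segmented
log-linear models with genuine slope changes agreeing on an open interval containing
both change points have identical parameters. -/
theorem stmt13 (β₁ β₂ β₁' β₂' τ τ' c d : ℝ)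
    (hsub : Set.Ioo c d ⊆ Set.Ioo (0:ℝ) 1)
    (hτ : τ ∈ Set.Ioo c d) (hτ' : τ' ∈ Set.Ioo c d)
    (hβ : β₁ ≠ β₂) (hβ' : β₁' ≠ β₂')
    (hagree : ∀ t ∈ Set.Ioo c d,
      β₁ * min (Real.log t - Real.log τ) 0
          + β₂ * (Real.log τ + max (Real.log t - Real.log τ) 0)
        = β₁' * min (Real.log t - Real.log τ') 0
          + β₂' * (Real.log τ' + max (Real.log t - Real.log τ') 0)) :
    β₁ = β₁' ∧ β₂ = β₂' ∧ τ = τ' :=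
  stmt13_general β₁ β₂ β₁' β₂' τ τ' c d hsub hτ hτ' hβ hagree
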